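/- arXiv:2007.13347 — 3 statements merged into one kernel-verified Lean document; each statement's English description precedes it below -/
import Mathlib

section
/- Let K ⊂ ℝⁿ be compact and path-connected, 𝒱 a vector space of real measurable functions on K, f : [0,1] → K a continuous surjection, and L : 𝒱 → ℝ a linear functional. Define L̃ on 𝒱 ∘ f by L̃(v ∘ f) := L(v) (well-defined since f admits a Borel right inverse). Then L is a K-moment functional if and only if L̃ is a [0,1]-moment functional. Moreover, if μ̃ represents L̃ then μ̃ ∘ f⁻¹ represents L, and there exists a Borel function g : K → [0,1] with f ∘ g = id_K such that if μ represents L then μ ∘ g⁻¹ represents L̃. -/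
/-!
Choosing in every fibre of `f` its least point gives a right inverse `g` of `f` with
`g ⁻¹' Iic a = f '' Iic a`; these sets are compact, hence closed, so `g` is Borel. Pushing a
representing measure forward along `f` (resp. `g`) then transports representations of `L̃` to
representations of `L` (resp. back), by the change of variables formula and `f ∘ g = id`.
-/

open MeasureTheory Set Function

theorem preimage_Iic_eq_image_Iic_of_isLeast {α β : Type*} [Preorder α] {f : α → β} {g : β → α}
    (hg : ∀ y, IsLeast (f ⁻¹' {y}) (g y)) (a : α) : g ⁻¹' Iic a = f '' Iic a := by
  ext y
  constructor
  · intro hy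
    exact ⟨g y, hy, (hg y).1⟩
  · rintro ⟨t, ht, rfl⟩
    exact ((hg (f t)).2 rfl).trans ht

theorem Continuous.exists_isLeast_preimage {α β : Type*} [LinearOrder α] [TopologicalSpace α]
    [ClosedIicTopology α] [CompactSpace α] [TopologicalSpace β] [T1Space β] {f : α → β}
    (hf : Continuous f) {y : β} (hy : y ∈ range f) : ∃ t, IsLeast (f ⁻¹' {y}) t :=
  ((isClosed_singleton.preimage hf).isCompact).exists_isLeast hy

theorem Continuous.exists_measurable_rightInverse_of_surjective {α β : Type*} [LinearOrder α]
    [TopologicalSpace α] [OrderTopology α] [CompactSpace α] [SecondCountableTopology α]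
    [MeasurableSpace α] [BorelSpace α] [TopologicalSpace β] [T2Space β] [MeasurableSpace β]
    [OpensMeasurableSpace β] {f : α → β} (hf : Continuous f) (hfs : Surjective f) :
    ∃ g : β → α, Measurable g ∧ RightInverse g f := by
  choose g hg using fun y => hf.exists_isLeast_preimage (hfs.range_eq ▸ mem_univ y)
  refine ⟨g, measurable_of_Iic fun a => ?_, fun y => (hg y).1⟩
  rw [preimage_Iic_eq_image_Iic_of_isLeast hg]
  exact (isClosed_Iic.isCompact.image hf).isClosed.measurableSet

section RepresentingMeasure

variable {ι X Y : Type*} [MeasurableSpace X] [MeasurableSpace Y]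

def IsRepresentingMeasure (Λ : ι → ℝ) (F : ι → X → ℝ) (μ : Measure X) : Prop :=
  ∀ i, Integrable (F i) μ ∧ Λ i = ∫ x, F i x ∂μ

theorem isRepresentingMeasure_map_iff {Λ : ι → ℝ} {F : ι → Y → ℝ} {μ : Measure X} {φ : X → Y}
    (hφ : AEMeasurable φ μ) (hF : ∀ i, AEStronglyMeasurable (F i) (μ.map φ)) :
    IsRepresentingMeasure Λ F (μ.map φ) ↔ IsRepresentingMeasure Λ (fun i => F i ∘ φ) μ :=
  forall_congr' fun i => and_congr (integrable_map_measure (hF i) hφ) <| by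
    rw [integral_map hφ (hF i)]
    rfl

end RepresentingMeasure

theorem stmt9_general {n : ℕ} (K : Set (Fin n → ℝ))
    (V : Submodule ℝ (K → ℝ)) (hVmeas : ∀ v ∈ V, Measurable v)
    (f : Set.Icc (0:ℝ) 1 → K) (hf : Continuous f) (hfs : Function.Surjective f)
    (L : V →ₗ[ℝ] ℝ) :
    ∃ g : K → Set.Icc (0:ℝ) 1, Measurable g ∧ (∀ x, f (g x) = x) ∧
      ((∃ μ : Measure K, IsFiniteMeasure μ ∧
          ∀ v : V, Integrable (v : K → ℝ) μ ∧ L v = ∫ x, (v : K → ℝ) x ∂μ) ↔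
        (∃ ν : Measure (Set.Icc (0:ℝ) 1), IsFiniteMeasure ν ∧
          ∀ v : V, Integrable ((v : K → ℝ) ∘ f) ν ∧ L v = ∫ t, (v : K → ℝ) (f t) ∂ν)) ∧
      (∀ ν : Measure (Set.Icc (0:ℝ) 1), IsFiniteMeasure ν →
        (∀ v : V, Integrable ((v : K → ℝ) ∘ f) ν ∧ L v = ∫ t, (v : K → ℝ) (f t) ∂ν) →
        ∀ v : V, L v = ∫ x, (v : K → ℝ) x ∂(ν.map f)) ∧
      (∀ μ : Measure K, IsFiniteMeasure μ →
        (∀ v : V, Integrable (v : K → ℝ) μ ∧ L v = ∫ x, (v : K → ℝ) x ∂μ) →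
        ∀ v : V, L v = ∫ t, (v : K → ℝ) (f t) ∂(μ.map g)) := by
  obtain ⟨g, hgm, hfg⟩ := hf.exists_measurable_rightInverse_of_surjective hfs
  have hvm (v : V) : Measurable (v : K → ℝ) := hVmeas v v.2
  have push_f (ν : Measure (Set.Icc (0:ℝ) 1))
      (hν : IsRepresentingMeasure L (fun v : V => (v : K → ℝ) ∘ f) ν) :
      IsRepresentingMeasure L (fun v : V => (v : K → ℝ)) (ν.map f) :=
    (isRepresentingMeasure_map_iff hf.measurable.aemeasurable
      fun v => (hvm v).aestronglyMeasurable).2 hν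
  have push_g (μ : Measure K) (hμ : IsRepresentingMeasure L (fun v : V => (v : K → ℝ)) μ) :
      IsRepresentingMeasure L (fun v : V => (v : K → ℝ) ∘ f) (μ.map g) := by
    refine (isRepresentingMeasure_map_iff hgm.aemeasurable
      fun v => ((hvm v).comp hf.measurable).aestronglyMeasurable).2 ?_
    simpa only [comp_assoc, hfg.comp_eq_id, comp_id] using hμ
  refine ⟨g, hgm, hfg, ⟨fun ⟨μ, _, hμ⟩ => ⟨μ.map g, inferInstance, push_g μ hμ⟩,
    fun ⟨ν, _, hν⟩ => ⟨ν.map f, inferInstance, push_f ν hν⟩⟩,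
    fun ν _ hν v => (push_f ν hν v).2, fun μ _ hμ v => (push_g μ hμ v).2⟩

theorem stmt9 {n : ℕ} (K : Set (Fin n → ℝ)) (hK : IsCompact K) (hpc : IsPathConnected K)
    (V : Submodule ℝ (K → ℝ)) (hVmeas : ∀ v ∈ V, Measurable v)
    (f : Set.Icc (0:ℝ) 1 → K) (hf : Continuous f) (hfs : Function.Surjective f)
    (L : V →ₗ[ℝ] ℝ) :
    ∃ g : K → Set.Icc (0:ℝ) 1, Measurable g ∧ (∀ x, f (g x) = x) ∧
      ((∃ μ : Measure K, IsFiniteMeasure μ ∧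
          ∀ v : V, Integrable (v : K → ℝ) μ ∧ L v = ∫ x, (v : K → ℝ) x ∂μ) ↔
        (∃ ν : Measure (Set.Icc (0:ℝ) 1), IsFiniteMeasure ν ∧
          ∀ v : V, Integrable ((v : K → ℝ) ∘ f) ν ∧ L v = ∫ t, (v : K → ℝ) (f t) ∂ν)) ∧
      (∀ ν : Measure (Set.Icc (0:ℝ) 1), IsFiniteMeasure ν →
        (∀ v : V, Integrable ((v : K → ℝ) ∘ f) ν ∧ L v = ∫ t, (v : K → ℝ) (f t) ∂ν) →
        ∀ v : V, L v = ∫ x, (v : K → ℝ) x ∂(ν.map f)) ∧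
      (∀ μ : Measure K, IsFiniteMeasure μ →
        (∀ v : V, Integrable (v : K → ℝ) μ ∧ L v = ∫ x, (v : K → ℝ) x ∂μ) →
        ∀ v : V, L v = ∫ t, (v : K → ℝ) (f t) ∂(μ.map g)) :=
  stmt9_general K V hVmeas f hf hfs L
end

section
/- Let K ⊂ ℝⁿ be compact and path-connected, g : K → [0,1] a measurable function, f : [0,1] → K continuous surjective with f ∘ g = id_K, and let L̃ : ℝ[t] → ℝ defined by L̃(t^d) := L̄(g^d) be a [0,1]-moment functional with representing measure μ̃, where L̄ : 𝒱 + ℝ[g] → ℝ is a continuous extension of a linear functional L : 𝒱 → ℝ with 1 ∈ 𝒱 ⊆ C(K, ℝ) (continuity meaning: if polynomials p_i converge uniformly on [0,1] to p ∈ C([0,1],ℝ) with p ∘ g ∈ 𝒱 + ℝ[g], then L̄(p_i ∘ g) → L̄(p ∘ g)). Then L is a K-moment functional with representing measure μ̃ ∘ f⁻¹. -/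
open MeasureTheory Filter Topology Polynomial

/-! For `v ∈ V` choose, by Weierstrass, polynomials `pᵢ → v ∘ f` uniformly on `[0,1]`. By the
moment condition `L̄(pᵢ ∘ g) = ∫ pᵢ dμ̃`, which tends to `∫ v ∘ f dμ̃ = ∫ v d(f₊μ̃)`; by continuity
of `L̄` it also tends to `L̄(v ∘ f ∘ g) = L̄(v) = L(v)`. -/

theorem tendsto_integral_of_tendstoUniformly {α E ι : Type*} [MeasurableSpace α]
    [NormedAddCommGroup E] [NormedSpace ℝ E] {μ : Measure α} [IsFiniteMeasure μ]
    {l : Filter ι} [l.IsCountablyGenerated] {F : ι → α → E} {f : α → E}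
    (hF : ∀ᶠ i in l, AEStronglyMeasurable (F i) μ) (hf : Integrable f μ)
    (h : TendstoUniformly F f l) :
    Tendsto (fun i => ∫ a, F i a ∂μ) l (𝓝 (∫ a, f a ∂μ)) := by
  refine tendsto_integral_filter_of_dominated_convergence (fun a => ‖f a‖ + 1) hF ?_
    (hf.norm.add (integrable_const 1)) (.of_forall fun a => h.tendsto_at a)
  filter_upwards [Metric.tendstoUniformly_iff.mp h 1 one_pos] with i hi
  refine .of_forall fun a => ?_
  have hclose : ‖F i a - f a‖ < 1 := by simpa [dist_eq_norm'] using hi a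
  linarith [norm_le_norm_add_norm_sub' (F i a) (f a)]

theorem exists_seq_polynomial_tendstoUniformly (s : Set ℝ) [CompactSpace s] (φ : C(s, ℝ)) :
    ∃ ps : ℕ → ℝ[X], TendstoUniformly (fun i (t : s) => (ps i).eval (t : ℝ)) φ atTop := by
  have hφ : φ ∈ (polynomialFunctions s).topologicalClosure := by
    rw [polynomialFunctions.topologicalClosure]; trivial
  obtain ⟨qs, hqs_mem, hqs⟩ := mem_closure_iff_seq_limit.mp hφ
  choose ps hps using fun i => hqs_mem i
  refine ⟨ps, ?_⟩
  simp only [ContinuousMap.tendsto_iff_tendstoUniformly] at hqs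
  convert hqs using 2 with i t
  rw [← (hps i).2]
  rfl

theorem Polynomial.eval_comp_mem_of_pow_mem {α R : Type*} [CommSemiring R]
    {W : Submodule R (α → R)} {g : α → R} (hpow : ∀ d : ℕ, (fun x => g x ^ d) ∈ W)
    (q : R[X]) : (fun x => q.eval (g x)) ∈ W := by
  induction q using Polynomial.induction_on' with
  | add p q hp hq =>
    simp only [eval_add]
    exact W.add_mem hp hq
  | monomial d a =>
    simp only [eval_monomial]
    exact W.smul_mem a (hpow d)

theorem integral_polynomial_eval {X : Type*} [MeasurableSpace X] {μ : Measure X}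
    {u : X → ℝ} (hu : ∀ d : ℕ, Integrable (fun t => u t ^ d) μ) (q : ℝ[X]) :
    ∫ t, q.eval (u t) ∂μ = ∑ i ∈ Finset.range (q.natDegree + 1), q.coeff i * ∫ t, u t ^ i ∂μ := by
  simp_rw [eval_eq_sum_range, ← integral_const_mul]
  exact integral_finsetSum _ fun i _ => (hu i).const_mul _

theorem apply_polynomial_eval_eq_integral {α X : Type*} [MeasurableSpace X] {μ : Measure X}
    {u : X → ℝ} (hu : ∀ d : ℕ, Integrable (fun t => u t ^ d) μ)
    {W : Submodule ℝ (α → ℝ)} {g : α → ℝ} (hpow : ∀ d : ℕ, (fun x => g x ^ d) ∈ W)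
    (Λ : W →ₗ[ℝ] ℝ) (hΛ : ∀ d : ℕ, Λ ⟨fun x => g x ^ d, hpow d⟩ = ∫ t, u t ^ d ∂μ)
    (q : ℝ[X]) :
    Λ ⟨fun x => q.eval (g x), q.eval_comp_mem_of_pow_mem hpow⟩ = ∫ t, q.eval (u t) ∂μ := by
  have hsum : (⟨fun x => q.eval (g x), q.eval_comp_mem_of_pow_mem hpow⟩ : W) =
      ∑ i ∈ Finset.range (q.natDegree + 1), q.coeff i • ⟨fun x => g x ^ i, hpow i⟩ := by
    ext x
    simp [eval_eq_sum_range]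
  rw [hsum, map_sum, integral_polynomial_eval hu]
  refine Finset.sum_congr rfl fun i _ => ?_
  rw [map_smul, hΛ, smul_eq_mul]

theorem stmt12_general {n : ℕ} (K : Set (Fin n → ℝ))
    (g : K → Set.Icc (0:ℝ) 1)
    (f : Set.Icc (0:ℝ) 1 → K) (hf : Continuous f)
    (hfg : ∀ x, f (g x) = x)
    (V : Submodule ℝ (K → ℝ)) (hVcont : ∀ v ∈ V, Continuous v)
    (L : V →ₗ[ℝ] ℝ)
    (W : Submodule ℝ (K → ℝ))
    (hW : W = V ⊔ Submodule.span ℝ (Set.range fun d : ℕ => fun x : K => (g x : ℝ) ^ d))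
    (hpow : ∀ d : ℕ, (fun x : K => (g x : ℝ) ^ d) ∈ W)
    (Lbar : W →ₗ[ℝ] ℝ)
    (hext : ∀ (v : K → ℝ) (hv : v ∈ V), Lbar ⟨v, hW ▸ Submodule.mem_sup_left hv⟩ = L ⟨v, hv⟩)
    (hcont : ∀ (ps : ℕ → Polynomial ℝ) (p : Set.Icc (0:ℝ) 1 → ℝ), Continuous p →
      TendstoUniformly (fun i (t : Set.Icc (0:ℝ) 1) => (ps i).eval (t : ℝ)) p atTop →
      ∀ (hmem : ∀ i, (fun x : K => (ps i).eval (g x : ℝ)) ∈ W)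
        (hpg : (fun x : K => p (g x)) ∈ W),
        Tendsto (fun i => Lbar ⟨fun x : K => (ps i).eval (g x : ℝ), hmem i⟩) atTop
          (nhds (Lbar ⟨fun x : K => p (g x), hpg⟩)))
    (μt : Measure (Set.Icc (0:ℝ) 1)) [IsFiniteMeasure μt]
    (hμt : ∀ d : ℕ, Lbar ⟨fun x : K => (g x : ℝ) ^ d, hpow d⟩ = ∫ t, (t : ℝ) ^ d ∂μt) :
    ∀ v : V, Integrable (v : K → ℝ) (μt.map f) ∧
      L v = ∫ x, (v : K → ℝ) x ∂(μt.map f) := by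
  have integrable_of_continuous {φ : Set.Icc (0:ℝ) 1 → ℝ} (hφ : Continuous φ) :
      Integrable φ μt := hφ.integrable_of_hasCompactSupport (.of_compactSpace φ)
  rintro ⟨v, hv⟩
  have hvf : Continuous (fun t => v (f t)) := (hVcont v hv).comp hf
  have hv_meas := (hVcont v hv).aestronglyMeasurable (μ := μt.map f)
  refine ⟨(integrable_map_measure hv_meas hf.aemeasurable).mpr (integrable_of_continuous hvf), ?_⟩
  rw [integral_map hf.aemeasurable hv_meas]
  obtain ⟨ps, hps⟩ := exists_seq_polynomial_tendstoUniformly _ ⟨_, hvf⟩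
  -- `v ∘ f ∘ g = v`, so `hcont` applied to `v ∘ f` computes `L v`.
  have hvW : (fun x => v (f (g x))) ∈ W := by
    simpa only [hfg] using hW ▸ Submodule.mem_sup_left hv
  have hlim_L := hcont ps _ hvf hps (fun i => (ps i).eval_comp_mem_of_pow_mem hpow) hvW
  have hlim_int : Tendsto (fun i => Lbar ⟨_, (ps i).eval_comp_mem_of_pow_mem hpow⟩) atTop
      (𝓝 (∫ t, v (f t) ∂μt)) := by
    simp_rw [apply_polynomial_eval_eq_integral
      (fun d => integrable_of_continuous (continuous_subtype_val.pow d)) hpow Lbar hμt]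
    exact tendsto_integral_of_tendstoUniformly
      (.of_forall fun i => ((ps i).continuous.comp continuous_subtype_val).aestronglyMeasurable)
      (integrable_of_continuous hvf) hps
  have hLv : Lbar ⟨fun x => v (f (g x)), hvW⟩ = L ⟨v, hv⟩ := by
    simp only [hfg]
    exact hext v hv
  rw [← hLv]
  exact tendsto_nhds_unique hlim_L hlim_int

theorem stmt12 {n : ℕ} (K : Set (Fin n → ℝ)) (hK : IsCompact K) (hpc : IsPathConnected K)
    (g : K → Set.Icc (0:ℝ) 1) (hg : Measurable g)
    (f : Set.Icc (0:ℝ) 1 → K) (hf : Continuous f) (hfs : Function.Surjective f)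
    (hfg : ∀ x, f (g x) = x)
    (V : Submodule ℝ (K → ℝ)) (hVcont : ∀ v ∈ V, Continuous v)
    (h1 : (fun _ => (1:ℝ)) ∈ V)
    (L : V →ₗ[ℝ] ℝ)
    (W : Submodule ℝ (K → ℝ))
    (hW : W = V ⊔ Submodule.span ℝ (Set.range fun d : ℕ => fun x : K => (g x : ℝ) ^ d))
    (hpow : ∀ d : ℕ, (fun x : K => (g x : ℝ) ^ d) ∈ W)
    (Lbar : W →ₗ[ℝ] ℝ)
    (hext : ∀ (v : K → ℝ) (hv : v ∈ V), Lbar ⟨v, hW ▸ Submodule.mem_sup_left hv⟩ = L ⟨v, hv⟩)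
    (hcont : ∀ (ps : ℕ → Polynomial ℝ) (p : Set.Icc (0:ℝ) 1 → ℝ), Continuous p →
      TendstoUniformly (fun i (t : Set.Icc (0:ℝ) 1) => (ps i).eval (t : ℝ)) p atTop →
      ∀ (hmem : ∀ i, (fun x : K => (ps i).eval (g x : ℝ)) ∈ W)
        (hpg : (fun x : K => p (g x)) ∈ W),
        Tendsto (fun i => Lbar ⟨fun x : K => (ps i).eval (g x : ℝ), hmem i⟩) atTop
          (nhds (Lbar ⟨fun x : K => p (g x), hpg⟩)))
    (μt : Measure (Set.Icc (0:ℝ) 1)) [IsFiniteMeasure μt]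
    (hμt : ∀ d : ℕ, Lbar ⟨fun x : K => (g x : ℝ) ^ d, hpow d⟩ = ∫ t, (t : ℝ) ^ d ∂μt) :
    ∀ v : V, Integrable (v : K → ℝ) (μt.map f) ∧
      L v = ∫ x, (v : K → ℝ) x ∂(μt.map f) :=
  stmt12_general K g f hf hfg V hVcont L W hW hpow Lbar hext hcont μt hμt
end

section
/- Daniell's representation theorem: let ℱ be a lattice of real-valued functions on a set X (closed under non-negative scalar multiples, sums, pointwise infima with each other and with non-negative constants, and differences g − f when f ≤ g), and let L : ℱ → ℝ satisfy additivity L(f+g) = L(f)+L(g), positive homogeneity L(c·f) = c·L(f) for c ≥ 0, monotonicity L(f) ≤ L(g) for f ≤ g, and the continuity property L(f_n) ↗ L(g) whenever f_n ∈ ℱ, f_n ↗ g ∈ ℱ pointwise. Then there exists a measure μ on (X, 𝒜) with 𝒜 = σ({f⁻¹((−∞, a]) : a ∈ ℝ, f ∈ ℱ}) such that L(f) = ∫_X f dμ for all f ∈ ℱ. -/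
/-!
Daniell's construction. Call `h : X → ℝ≥0∞` an upper function if it is the increasing limit of
nonnegative members of `F`, and let `L⁺ h` be the supremum of `L g` over `g ∈ F` with
`0 ≤ g ≤ h`. The continuity of `L`, applied to `min g fₙ ↑ g`, shows `L⁺ h = lim L fₙ` for every
sequence `fₙ ↑ h` in `F`; hence `L⁺` is additive and, by a diagonal argument, commutes with
increasing limits of upper functions. So `μ A = inf {L⁺ h : h ≥ 1 on A}` is an outer measure.
The sets `{g ≥ 1}` are Carathéodory measurable: for `h ≥ 1` on `T`, split
`h = min h uₙ + (h - uₙ)` with ramps `uₙ ∈ F` decreasing to the indicator of `{g ≥ 1}`.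
Finally, slice `g ≥ 0` into `pₖ = min g ((k + 1) δ) - min g (k δ)`: both `L pₖ₊₁` and
`∫ pₖ₊₁ dμ` are at most `δ μ {g ≥ (k + 1) δ}`, which is at most both `L pₖ` and `∫ pₖ dμ`.
Summing over `k` gives `∫ (g - min g δ) dμ ≤ L g` and `L (g - min g δ) ≤ ∫ g dμ`; let `δ → 0`.
-/

open MeasureTheory Filter Set Topology
open scoped ENNReal

section

variable {X : Type*}

structure IsDaniellIntegral (F : Set (X → ℝ)) (L : (X → ℝ) → ℝ) : Prop where
  zero_mem : 0 ∈ F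
  smul_mem : ∀ c : ℝ, 0 ≤ c → ∀ f ∈ F, c • f ∈ F
  add_mem : ∀ f ∈ F, ∀ g ∈ F, f + g ∈ F
  inf_mem : ∀ f ∈ F, ∀ g ∈ F, f ⊓ g ∈ F
  inf_const_mem : ∀ c : ℝ, 0 ≤ c → ∀ f ∈ F, (fun x => min (f x) c) ∈ F
  sub_mem : ∀ f ∈ F, ∀ g ∈ F, f ≤ g → g - f ∈ F
  map_add : ∀ f ∈ F, ∀ g ∈ F, L (f + g) = L f + L g
  map_smul : ∀ c : ℝ, 0 ≤ c → ∀ f ∈ F, L (c • f) = c * L f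
  mono : ∀ f ∈ F, ∀ g ∈ F, f ≤ g → L f ≤ L g
  tendsto : ∀ (f : ℕ → X → ℝ) (g : X → ℝ), (∀ n, f n ∈ F) → g ∈ F → Monotone f →
    (∀ x, Tendsto (fun n => f n x) atTop (𝓝 (g x))) → Tendsto (fun n => L (f n)) atTop (𝓝 (L g))

theorem tendsto_min_of_ofReal_le_iSup {y : ℝ} {a : ℕ → ℝ} (ha₀ : ∀ n, 0 ≤ a n) (ha : Monotone a)
    (hy : ENNReal.ofReal y ≤ ⨆ n, ENNReal.ofReal (a n)) :
    Tendsto (fun n => min y (a n)) atTop (𝓝 y) := by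
  refine tendsto_order.2
    ⟨fun b hb => ?_, fun b hb => .of_forall fun n => (min_le_left _ _).trans_lt hb⟩
  rcases lt_or_ge b 0 with hb₀ | hb₀
  · exact .of_forall fun n => lt_min hb (hb₀.trans_le (ha₀ n))
  · obtain ⟨n₀, hn₀⟩ :=
      lt_iSup_iff.1 (((ENNReal.ofReal_lt_ofReal_iff (hb₀.trans_lt hb)).2 hb).trans_le hy)
    have hbn₀ : b < a n₀ := (ENNReal.ofReal_lt_ofReal_iff'.1 hn₀).1
    exact eventually_atTop.2 ⟨n₀, fun n hn => lt_min hb (hbn₀.trans_le (ha hn))⟩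

theorem sub_min_eq_max_sub (a b : ℝ) : a - min a b = max (a - b) 0 := by
  rcases le_total a b with h | h <;> simp [h]

def ramp (n : ℕ) (y : ℝ) : ℝ := max ((n + 1) * min y 1 - n) 0

theorem ramp_nonneg (n : ℕ) (y : ℝ) : 0 ≤ ramp n y := le_max_right _ _

theorem ramp_of_one_le (n : ℕ) {y : ℝ} (hy : 1 ≤ y) : ramp n y = 1 := by
  simp [ramp, min_eq_right hy]

theorem antitone_ramp (y : ℝ) : Antitone fun n => ramp n y := by
  intro m n hmn
  have hmn' : (m : ℝ) ≤ n := Nat.cast_le.2 hmn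
  have hy : min y 1 ≤ 1 := min_le_right _ _
  exact max_le_max (by nlinarith) le_rfl

theorem exists_ramp_eq_zero {y : ℝ} (hy : y < 1) : ∃ n, ramp n y = 0 := by
  obtain ⟨n, hn⟩ := exists_nat_ge (y / (1 - y))
  refine ⟨n, max_eq_right ?_⟩
  rw [div_le_iff₀ (sub_pos.2 hy)] at hn
  rw [min_eq_left hy.le]
  linarith

def piece (δ : ℝ) (k : ℕ) (y : ℝ) : ℝ := min y ((k + 1 : ℕ) * δ) - min y (k * δ)

section piece

variable {δ y : ℝ}

theorem piece_nonneg (hδ : 0 ≤ δ) (k : ℕ) (y : ℝ) : 0 ≤ piece δ k y :=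
  sub_nonneg.2 (min_le_min_left _ (mul_le_mul_of_nonneg_right (by simp) hδ))

theorem piece_le (hδ : 0 ≤ δ) (k : ℕ) (y : ℝ) : piece δ k y ≤ δ := by
  simp only [piece, Nat.cast_succ]
  rcases le_total y (k * δ) with h | h
  · rw [min_eq_left h, min_eq_left (by nlinarith)]
    linarith
  · rw [min_eq_right h]
    linarith [min_le_right y ((k + 1) * δ)]

theorem piece_of_le (hδ : 0 ≤ δ) {k : ℕ} (hy : (k + 1 : ℕ) * δ ≤ y) : piece δ k y = δ := by
  have hk : (k : ℝ) * δ ≤ y := (mul_le_mul_of_nonneg_right (by simp) hδ).trans hy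
  rw [piece, min_eq_right hy, min_eq_right hk, Nat.cast_succ]
  ring

theorem piece_of_le_mul (hδ : 0 ≤ δ) {k : ℕ} (hy : y ≤ k * δ) : piece δ k y = 0 := by
  rw [piece, min_eq_left hy, min_eq_left (hy.trans (mul_le_mul_of_nonneg_right (by simp) hδ)),
    sub_self]

theorem sum_range_piece (hy : 0 ≤ y) (n : ℕ) :
    ∑ k ∈ Finset.range n, piece δ k y = min y (n * δ) := by
  simpa [piece, min_eq_right hy] using Finset.sum_range_sub (fun k => min y (k * δ)) n

theorem tendsto_min_nat_mul (hδ : 0 < δ) (y : ℝ) :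
    Tendsto (fun n : ℕ => min y (n * δ)) atTop (𝓝 y) := by
  obtain ⟨N, hN⟩ := exists_nat_ge (y / δ)
  exact tendsto_atTop_of_eventually_const (i₀ := N) fun n hn =>
    min_eq_left ((div_le_iff₀ hδ).1 (hN.trans (Nat.cast_le.2 hn)))

theorem hasSum_piece (hy : 0 ≤ y) (hδ : 0 < δ) : HasSum (fun k => piece δ k y) y := by
  refine (hasSum_iff_tendsto_nat_of_nonneg (piece_nonneg hδ.le · y) y).2 ?_
  simp_rw [sum_range_piece hy]
  exact tendsto_min_nat_mul hδ y

theorem hasSum_piece_succ (hy : 0 ≤ y) (hδ : 0 < δ) :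
    HasSum (fun k => piece δ (k + 1) y) (y - min y δ) := by
  simpa [piece, min_eq_right hy] using (hasSum_nat_add_iff' 1).2 (hasSum_piece hy hδ)

end piece

theorem ofReal_eq_tsum_of_hasSum {a : ℕ → ℝ} {s : ℝ} (ha₀ : ∀ k, 0 ≤ a k) (ha : HasSum a s) :
    ENNReal.ofReal s = ∑' k, ENNReal.ofReal (a k) := by
  rw [← ha.tsum_eq, ENNReal.ofReal_tsum_of_nonneg ha₀ ha.summable]

theorem tsum_eq_iSup_sum_range (h : ℕ → X → ℝ≥0∞) :
    ∑' i, h i = ⨆ n, ∑ i ∈ Finset.range n, h i := by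
  ext x
  simp only [ENNReal.tsum_apply, ENNReal.tsum_eq_iSup_nat, iSup_apply, Finset.sum_apply]

theorem monotone_sum_range (h : ℕ → X → ℝ≥0∞) :
    Monotone fun n => ∑ i ∈ Finset.range n, h i :=
  fun _ _ hmn => Finset.sum_le_sum_of_subset (Finset.range_mono hmn)

section lintegral

variable [MeasurableSpace X] {μ : Measure X} {A : Set X} {u : X → ℝ} {c : ℝ}

theorem lintegral_ofReal_eq_tsum {q : ℕ → X → ℝ} {G : X → ℝ} (hq : ∀ k, Measurable (q k))
    (hq₀ : ∀ k x, 0 ≤ q k x) (hG : ∀ x, HasSum (fun k => q k x) (G x)) :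
    ∫⁻ x, ENNReal.ofReal (G x) ∂μ = ∑' k, ∫⁻ x, ENNReal.ofReal (q k x) ∂μ := by
  rw [← lintegral_tsum fun k => (hq k).ennreal_ofReal.aemeasurable]
  exact lintegral_congr fun x => ofReal_eq_tsum_of_hasSum (hq₀ · x) (hG x)

theorem ofReal_mul_le_lintegral (hA : MeasurableSet A) (hu : ∀ x ∈ A, c ≤ u x) :
    ENNReal.ofReal c * μ A ≤ ∫⁻ x, ENNReal.ofReal (u x) ∂μ := by
  rw [← lintegral_indicator_const hA]
  refine lintegral_mono fun x => ?_
  by_cases hx : x ∈ A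
  · simpa [hx] using ENNReal.ofReal_le_ofReal (hu x hx)
  · simp [hx]

theorem lintegral_le_ofReal_mul (hA : MeasurableSet A) (hu_le : ∀ x, u x ≤ c)
    (hu_zero : ∀ x ∉ A, u x = 0) : ∫⁻ x, ENNReal.ofReal (u x) ∂μ ≤ ENNReal.ofReal c * μ A := by
  rw [← lintegral_indicator_const hA]
  refine lintegral_mono fun x => ?_
  by_cases hx : x ∈ A
  · simpa [hx] using ENNReal.ofReal_le_ofReal (hu_le x)
  · simp [hx, hu_zero x hx]

end lintegral

namespace IsDaniellIntegral

variable {F : Set (X → ℝ)} {L : (X → ℝ) → ℝ} {f g u : X → ℝ}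

theorem map_zero (hL : IsDaniellIntegral F L) : L 0 = 0 := by
  simpa using hL.map_smul 0 le_rfl 0 hL.zero_mem

theorem nonneg (hL : IsDaniellIntegral F L) (hf : f ∈ F) (hf₀ : 0 ≤ f) : 0 ≤ L f :=
  hL.map_zero ▸ hL.mono 0 hL.zero_mem f hf hf₀

theorem map_sub (hL : IsDaniellIntegral F L) (hf : f ∈ F) (hg : g ∈ F) (hfg : f ≤ g) :
    L (g - f) = L g - L f := by
  have := hL.map_add _ (hL.sub_mem f hf g hg hfg) f hf
  rw [sub_add_cancel] at this
  linarith

theorem sup_mem (hL : IsDaniellIntegral F L) (hf : f ∈ F) (hg : g ∈ F) (hg₀ : 0 ≤ g) :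
    f ⊔ g ∈ F := by
  have hfg : f ⊔ g = f + g - f ⊓ g := by
    ext x
    simp only [Pi.sup_apply, Pi.add_apply, Pi.sub_apply, Pi.inf_apply]
    linarith [min_add_max (f x) (g x)]
  rw [hfg]
  exact hL.sub_mem _ (hL.inf_mem f hf g hg) _ (hL.add_mem f hf g hg)
    (inf_le_left.trans (le_add_of_nonneg_right hg₀))

theorem sub_inf_const_mem (hL : IsDaniellIntegral F L) (hf : f ∈ F) {c : ℝ} (hc : 0 ≤ c) :
    f - (fun x => min (f x) c) ∈ F :=
  hL.sub_mem _ (hL.inf_const_mem c hc f hf) f hf fun _ => min_le_left _ _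

theorem posPart_mem (hL : IsDaniellIntegral F L) (hf : f ∈ F) : f⁺ ∈ F := by
  convert hL.sub_inf_const_mem hf le_rfl using 1
  ext x
  simp [sub_min_eq_max_sub, posPart]

theorem negPart_mem (hL : IsDaniellIntegral F L) (hf : f ∈ F) : f⁻ ∈ F := by
  convert hL.sub_mem _ (hL.inf_const_mem 0 le_rfl f hf) 0 hL.zero_mem fun _ => min_le_right _ _
    using 1
  ext x
  rcases le_total (f x) 0 with h | h <;> simp [negPart, h]

structure IsIncreasingApprox (F : Set (X → ℝ)) (f : ℕ → X → ℝ) (h : X → ℝ≥0∞) : Prop where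
  mem : ∀ n, f n ∈ F
  nonneg : ∀ n, 0 ≤ f n
  mono : Monotone f
  iSup_eq : ∀ x, ⨆ n, ENNReal.ofReal (f n x) = h x

def upperClass (F : Set (X → ℝ)) : Set (X → ℝ≥0∞) := {h | ∃ f, IsIncreasingApprox F f h}

noncomputable def upperIntegral (F : Set (X → ℝ)) (L : (X → ℝ) → ℝ) (h : X → ℝ≥0∞) : ℝ≥0∞ :=
  ⨆ (g ∈ F) (_ : 0 ≤ g) (_ : ∀ x, ENNReal.ofReal (g x) ≤ h x), ENNReal.ofReal (L g)

theorem le_upperIntegral {h : X → ℝ≥0∞} (hg : g ∈ F) (hg₀ : 0 ≤ g)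
    (hgh : ∀ x, ENNReal.ofReal (g x) ≤ h x) : ENNReal.ofReal (L g) ≤ upperIntegral F L h :=
  le_iSup₂_of_le g hg <| le_iSup₂_of_le hg₀ hgh le_rfl

theorem upperIntegral_mono : Monotone (upperIntegral F L) := fun _ _ hhk =>
  iSup₂_le fun _ hg => iSup₂_le fun hg₀ hgh =>
    le_upperIntegral hg hg₀ fun x => (hgh x).trans (hhk x)

namespace IsIncreasingApprox

variable {f g : ℕ → X → ℝ} {h k : X → ℝ≥0∞}

theorem ofReal_le (hf : IsIncreasingApprox F f h) (n : ℕ) (x : X) :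
    ENNReal.ofReal (f n x) ≤ h x :=
  hf.iSup_eq x ▸ le_iSup (fun n => ENNReal.ofReal (f n x)) n

theorem monotone_ofReal (hf : IsIncreasingApprox F f h) (x : X) :
    Monotone fun n => ENNReal.ofReal (f n x) :=
  fun _ _ hnm => ENNReal.ofReal_le_ofReal (hf.mono hnm x)

theorem monotone_ofReal_L (hf : IsIncreasingApprox F f h) (hL : IsDaniellIntegral F L) :
    Monotone fun n => ENNReal.ofReal (L (f n)) :=
  fun n m hnm => ENNReal.ofReal_le_ofReal (hL.mono _ (hf.mem n) _ (hf.mem m) (hf.mono hnm))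

theorem const (hu : u ∈ F) (hu₀ : 0 ≤ u) :
    IsIncreasingApprox F (fun _ => u) (fun x => ENNReal.ofReal (u x)) :=
  ⟨fun _ => hu, fun _ => hu₀, monotone_const, fun _ => iSup_const⟩

theorem add (hf : IsIncreasingApprox F f h) (hg : IsIncreasingApprox F g k)
    (hL : IsDaniellIntegral F L) : IsIncreasingApprox F (f + g) (h + k) where
  mem n := hL.add_mem _ (hf.mem n) _ (hg.mem n)
  nonneg n := add_nonneg (hf.nonneg n) (hg.nonneg n)
  mono := hf.mono.add hg.mono
  iSup_eq x := by
    rw [Pi.add_apply, ← hf.iSup_eq, ← hg.iSup_eq,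
      ENNReal.iSup_add_iSup_of_monotone (hf.monotone_ofReal x) (hg.monotone_ofReal x)]
    exact iSup_congr fun n => ENNReal.ofReal_add (hf.nonneg n x) (hg.nonneg n x)

theorem inf (hf : IsIncreasingApprox F f h) (hg : IsIncreasingApprox F g k)
    (hL : IsDaniellIntegral F L) : IsIncreasingApprox F (f ⊓ g) (h ⊓ k) where
  mem n := hL.inf_mem _ (hf.mem n) _ (hg.mem n)
  nonneg n := le_inf (hf.nonneg n) (hg.nonneg n)
  mono := hf.mono.inf hg.mono
  iSup_eq x := by
    rw [Pi.inf_apply, ← hf.iSup_eq, ← hg.iSup_eq,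
      ← iSup_inf_of_monotone (hf.monotone_ofReal x) (hg.monotone_ofReal x)]
    exact iSup_congr fun n => ENNReal.ofReal_min _ _

theorem tsub_ofReal (hf : IsIncreasingApprox F f h) (hL : IsDaniellIntegral F L) (hu : u ∈ F)
    (hu₀ : 0 ≤ u) :
    IsIncreasingApprox F (fun n => f n - f n ⊓ u) (fun x => h x - ENNReal.ofReal (u x)) where
  mem n := hL.sub_mem _ (hL.inf_mem _ (hf.mem n) u hu) _ (hf.mem n) inf_le_left
  nonneg n := sub_nonneg.2 inf_le_left
  mono n m hnm x := by
    simp only [Pi.sub_apply, Pi.inf_apply, sub_min_eq_max_sub]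
    exact max_le_max (sub_le_sub_right (hf.mono hnm x) _) le_rfl
  iSup_eq x := by
    rw [← hf.iSup_eq, ENNReal.iSup_sub]
    refine iSup_congr fun n => ?_
    simp only [Pi.sub_apply, Pi.inf_apply, sub_min_eq_max_sub]
    rw [← ENNReal.ofReal_sub _ (hu₀ x)]
    exact (ENNReal.ofReal_max _ _).trans (by simp)

end IsIncreasingApprox

theorem ofReal_le_iSup (hL : IsDaniellIntegral F L) {f : ℕ → X → ℝ} {h : X → ℝ≥0∞}
    (hf : IsIncreasingApprox F f h) (hg : g ∈ F) (hgh : ∀ x, ENNReal.ofReal (g x) ≤ h x) :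
    ENNReal.ofReal (L g) ≤ ⨆ n, ENNReal.ofReal (L (f n)) := by
  have hLg : Tendsto (fun n => L (g ⊓ f n)) atTop (𝓝 (L g)) :=
    hL.tendsto _ g (fun n => hL.inf_mem g hg _ (hf.mem n)) hg
      (fun _ _ hnm => inf_le_inf_left g (hf.mono hnm)) fun x =>
      tendsto_min_of_ofReal_le_iSup (fun n => hf.nonneg n x) (fun _ _ hnm => hf.mono hnm x)
        ((hgh x).trans_eq (hf.iSup_eq x).symm)
  refine le_of_tendsto' ((ENNReal.continuous_ofReal.tendsto _).comp hLg) fun n => ?_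
  exact (ENNReal.ofReal_le_ofReal (hL.mono _ (hL.inf_mem g hg _ (hf.mem n)) _ (hf.mem n)
    inf_le_right)).trans (le_iSup (fun n => ENNReal.ofReal (L (f n))) n)

variable {h k : X → ℝ≥0∞}

theorem upperIntegral_eq_iSup (hL : IsDaniellIntegral F L) {f : ℕ → X → ℝ}
    (hf : IsIncreasingApprox F f h) : upperIntegral F L h = ⨆ n, ENNReal.ofReal (L (f n)) :=
  le_antisymm (iSup₂_le fun _ hg => iSup₂_le fun _ hgh => hL.ofReal_le_iSup hf hg hgh)
    (iSup_le fun n => le_upperIntegral (hf.mem n) (hf.nonneg n) (hf.ofReal_le n))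

theorem upperIntegral_ofReal (hL : IsDaniellIntegral F L) (hu : u ∈ F) (hu₀ : 0 ≤ u) :
    upperIntegral F L (fun x => ENNReal.ofReal (u x)) = ENNReal.ofReal (L u) := by
  rw [hL.upperIntegral_eq_iSup (.const hu hu₀), iSup_const]

theorem isIncreasingApprox_zero (hL : IsDaniellIntegral F L) :
    IsIncreasingApprox F (fun _ => 0) 0 :=
  ⟨fun _ => hL.zero_mem, fun _ => le_rfl, monotone_const, fun x => by simp⟩

theorem zero_mem_upperClass (hL : IsDaniellIntegral F L) : (0 : X → ℝ≥0∞) ∈ upperClass F :=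
  ⟨_, hL.isIncreasingApprox_zero⟩

theorem upperIntegral_zero (hL : IsDaniellIntegral F L) : upperIntegral F L 0 = 0 := by
  simp [hL.upperIntegral_eq_iSup hL.isIncreasingApprox_zero, hL.map_zero]

theorem add_mem_upperClass (hL : IsDaniellIntegral F L) (hh : h ∈ upperClass F)
    (hk : k ∈ upperClass F) : h + k ∈ upperClass F :=
  let ⟨_, hf⟩ := hh; let ⟨_, hg⟩ := hk; ⟨_, hf.add hg hL⟩

theorem upperIntegral_add (hL : IsDaniellIntegral F L) (hh : h ∈ upperClass F)
    (hk : k ∈ upperClass F) :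
    upperIntegral F L (h + k) = upperIntegral F L h + upperIntegral F L k := by
  obtain ⟨f, hf⟩ := hh
  obtain ⟨g, hg⟩ := hk
  rw [hL.upperIntegral_eq_iSup (hf.add hg hL), hL.upperIntegral_eq_iSup hf,
    hL.upperIntegral_eq_iSup hg,
    ENNReal.iSup_add_iSup_of_monotone (hf.monotone_ofReal_L hL) (hg.monotone_ofReal_L hL)]
  refine iSup_congr fun n => ?_
  rw [Pi.add_apply, hL.map_add _ (hf.mem n) _ (hg.mem n),
    ENNReal.ofReal_add (hL.nonneg (hf.mem n) (hf.nonneg n)) (hL.nonneg (hg.mem n) (hg.nonneg n))]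

theorem upperIntegral_inf_add_tsub (hL : IsDaniellIntegral F L) (hh : h ∈ upperClass F)
    (hu : u ∈ F) (hu₀ : 0 ≤ u) :
    upperIntegral F L (h ⊓ fun x => ENNReal.ofReal (u x))
      + upperIntegral F L (fun x => h x - ENNReal.ofReal (u x)) = upperIntegral F L h := by
  obtain ⟨f, hf⟩ := hh
  rw [← hL.upperIntegral_add ⟨_, hf.inf (.const hu hu₀) hL⟩ ⟨_, hf.tsub_ofReal hL hu hu₀⟩]
  congr 1
  ext x
  exact add_comm _ _ |>.trans tsub_add_min

theorem exists_isIncreasingApprox_iSup (hL : IsDaniellIntegral F L) {h : ℕ → X → ℝ≥0∞}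
    (hh : ∀ j, h j ∈ upperClass F) (hmono : Monotone h) :
    ∃ f, IsIncreasingApprox F f (⨆ j, h j) ∧ ∀ n x, ENNReal.ofReal (f n x) ≤ h n x := by
  choose f hf using hh
  let d : ℕ → X → ℝ := fun n => (Finset.range (n + 1)).sup' Finset.nonempty_range_add_one (f · n)
  have le_d {j n : ℕ} (hjn : j ≤ n) : f j n ≤ d n :=
    Finset.le_sup' (f · n) (Finset.mem_range_succ_iff.2 hjn)
  have hd_le (n : ℕ) (x : X) : ENNReal.ofReal (d n x) ≤ h n x := by
    obtain ⟨j, hj, hdj⟩ :=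
      Finset.exists_mem_eq_sup' (Finset.nonempty_range_add_one (n := n)) (f · n x)
    rw [show d n x = _ from Finset.sup'_apply _ _ x, hdj]
    exact ((hf j).ofReal_le n x).trans (hmono (Finset.mem_range_succ_iff.1 hj) x)
  have hd (n : ℕ) : d n ∈ F ∧ 0 ≤ d n :=
    Finset.sup'_induction (p := fun g => g ∈ F ∧ 0 ≤ g) _ _
      (fun _ ha _ hb => ⟨hL.sup_mem ha.1 hb.1 hb.2, le_sup_of_le_left ha.2⟩)
      fun j _ => ⟨(hf j).mem n, (hf j).nonneg n⟩
  refine ⟨d, ⟨fun n => (hd n).1, fun n => (hd n).2, monotone_nat_of_le_succ fun n => ?_,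
    fun x => le_antisymm ?_ ?_⟩, hd_le⟩
  · exact Finset.sup'_le _ _ fun j hj =>
      ((hf j).mono n.le_succ).trans (le_d ((Finset.mem_range_succ_iff.1 hj).trans n.le_succ))
  · exact iSup_le fun n => (hd_le n x).trans (le_iSup h n x)
  · rw [iSup_apply]
    refine iSup_le fun j => (hf j).iSup_eq x ▸ iSup_le fun n => ?_
    exact (ENNReal.ofReal_le_ofReal (((hf j).mono (le_max_right j n) x).trans
      (le_d (le_max_left j n) x))).trans (le_iSup (fun n => ENNReal.ofReal (d n x)) (max j n))

theorem iSup_mem_upperClass (hL : IsDaniellIntegral F L) {h : ℕ → X → ℝ≥0∞}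
    (hh : ∀ j, h j ∈ upperClass F) (hmono : Monotone h) : ⨆ j, h j ∈ upperClass F :=
  let ⟨f, hf, _⟩ := hL.exists_isIncreasingApprox_iSup hh hmono; ⟨f, hf⟩

theorem upperIntegral_iSup (hL : IsDaniellIntegral F L) {h : ℕ → X → ℝ≥0∞}
    (hh : ∀ j, h j ∈ upperClass F) (hmono : Monotone h) :
    upperIntegral F L (⨆ j, h j) = ⨆ j, upperIntegral F L (h j) := by
  obtain ⟨f, hf, hfh⟩ := hL.exists_isIncreasingApprox_iSup hh hmono
  refine le_antisymm ?_ (iSup_le fun j => upperIntegral_mono (le_iSup h j))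
  rw [hL.upperIntegral_eq_iSup hf]
  exact iSup_mono fun n => le_upperIntegral (hf.mem n) (hf.nonneg n) (hfh n)

theorem sum_range_mem_upperClass (hL : IsDaniellIntegral F L) {h : ℕ → X → ℝ≥0∞}
    (hh : ∀ i, h i ∈ upperClass F) (n : ℕ) : ∑ i ∈ Finset.range n, h i ∈ upperClass F := by
  induction n with
  | zero => simpa using hL.zero_mem_upperClass
  | succ n ih => simpa [Finset.sum_range_succ] using hL.add_mem_upperClass ih (hh n)

theorem upperIntegral_sum_range (hL : IsDaniellIntegral F L) {h : ℕ → X → ℝ≥0∞}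
    (hh : ∀ i, h i ∈ upperClass F) (n : ℕ) :
    upperIntegral F L (∑ i ∈ Finset.range n, h i)
      = ∑ i ∈ Finset.range n, upperIntegral F L (h i) := by
  induction n with
  | zero => simpa using hL.upperIntegral_zero
  | succ n ih =>
    rw [Finset.sum_range_succ, Finset.sum_range_succ,
      hL.upperIntegral_add (hL.sum_range_mem_upperClass hh n) (hh n), ih]

theorem tsum_mem_upperClass (hL : IsDaniellIntegral F L) {h : ℕ → X → ℝ≥0∞}
    (hh : ∀ i, h i ∈ upperClass F) : ∑' i, h i ∈ upperClass F :=
  tsum_eq_iSup_sum_range h ▸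
    hL.iSup_mem_upperClass (hL.sum_range_mem_upperClass hh) (monotone_sum_range h)

theorem upperIntegral_tsum (hL : IsDaniellIntegral F L) {h : ℕ → X → ℝ≥0∞}
    (hh : ∀ i, h i ∈ upperClass F) :
    upperIntegral F L (∑' i, h i) = ∑' i, upperIntegral F L (h i) := by
  rw [tsum_eq_iSup_sum_range, hL.upperIntegral_iSup (hL.sum_range_mem_upperClass hh)
    (monotone_sum_range h), ENNReal.tsum_eq_iSup_nat]
  simp_rw [hL.upperIntegral_sum_range hh]

noncomputable def outer (F : Set (X → ℝ)) (L : (X → ℝ) → ℝ) (A : Set X) : ℝ≥0∞ :=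
  ⨅ h ∈ upperClass F, ⨅ (_ : ∀ x ∈ A, 1 ≤ h x), upperIntegral F L h

variable {A : Set X}

theorem outer_le (hh : h ∈ upperClass F) (hA : ∀ x ∈ A, 1 ≤ h x) :
    outer F L A ≤ upperIntegral F L h :=
  iInf₂_le_of_le h hh (iInf_le _ hA)

theorem le_outer {c : ℝ≥0∞}
    (H : ∀ h ∈ upperClass F, (∀ x ∈ A, 1 ≤ h x) → c ≤ upperIntegral F L h) : c ≤ outer F L A :=
  le_iInf₂ fun h hh => le_iInf (H h hh)

theorem outer_mono : Monotone (outer F L) := fun _ _ hAB =>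
  le_outer fun _ hh h1 => outer_le hh fun x hx => h1 x (hAB hx)

theorem outer_empty (hL : IsDaniellIntegral F L) : outer F L ∅ = 0 :=
  nonpos_iff_eq_zero.1 <| (outer_le hL.zero_mem_upperClass (by simp)).trans_eq hL.upperIntegral_zero

theorem outer_iUnion_le (hL : IsDaniellIntegral F L) (A : ℕ → Set X) :
    outer F L (⋃ i, A i) ≤ ∑' i, outer F L (A i) := by
  refine ENNReal.le_of_forall_pos_le_add fun ε hε hfin => ?_
  obtain ⟨ε', hε'₀, hε'⟩ := ENNReal.exists_pos_sum_of_countable' (ENNReal.coe_ne_zero.2 hε.ne') ℕ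
  have hA (i : ℕ) : ∃ h, (∀ x ∈ A i, 1 ≤ h x) ∧ h ∈ upperClass F ∧
      upperIntegral F L h < outer F L (A i) + ε' i := by
    have hfin_i : outer F L (A i) ≠ ∞ := ne_top_of_le_ne_top hfin.ne (ENNReal.le_tsum i)
    simpa [outer, iInf_lt_iff] using ENNReal.lt_add_right hfin_i (hε'₀ i).ne'
  choose h h1 hh hlt using hA
  calc outer F L (⋃ i, A i) ≤ upperIntegral F L (∑' i, h i) := by
        refine outer_le (hL.tsum_mem_upperClass hh) fun x hx => ?_
        obtain ⟨i, hi⟩ := mem_iUnion.1 hx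
        exact (h1 i x hi).trans (ENNReal.tsum_apply ▸ ENNReal.le_tsum i)
    _ = ∑' i, upperIntegral F L (h i) := hL.upperIntegral_tsum hh
    _ ≤ ∑' i, (outer F L (A i) + ε' i) := ENNReal.tsum_le_tsum fun i => (hlt i).le
    _ ≤ ∑' i, outer F L (A i) + ε := by
        rw [ENNReal.tsum_add]
        gcongr

noncomputable def outerMeasure (hL : IsDaniellIntegral F L) : OuterMeasure X where
  measureOf := outer F L
  empty := hL.outer_empty
  mono hAB := outer_mono hAB
  iUnion_nat A _ := hL.outer_iUnion_le A

theorem ramp_mem (hL : IsDaniellIntegral F L) (hg : g ∈ F) (n : ℕ) :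
    (fun x => ramp n (g x)) ∈ F := by
  have hw : ((n : ℝ) + 1) • (fun x => min (g x) 1) ∈ F :=
    hL.smul_mem _ (by positivity) _ (hL.inf_const_mem 1 zero_le_one g hg)
  convert hL.sub_inf_const_mem hw n.cast_nonneg using 1
  ext x
  simp [ramp, sub_min_eq_max_sub]

theorem isCaratheodory_setOf_one_le (hL : IsDaniellIntegral F L) (hg : g ∈ F) :
    MeasurableSet[hL.outerMeasure.caratheodory] {x | 1 ≤ g x} := by
  rw [OuterMeasure.isCaratheodory_iff_le]
  intro T
  refine le_outer fun h hh hT => ?_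
  -- `h - ramp n ∘ g` increases to a function that is `≥ 1` on `T \ {1 ≤ g}`
  let k : ℕ → X → ℝ≥0∞ := fun n x => h x - ENNReal.ofReal (ramp n (g x))
  obtain ⟨f, hf⟩ := hh
  have hk (n : ℕ) : k n ∈ upperClass F :=
    ⟨_, hf.tsub_ofReal hL (hL.ramp_mem hg n) fun x => ramp_nonneg n _⟩
  have hk_mono : Monotone k := fun m n hmn x =>
    tsub_le_tsub_left (ENNReal.ofReal_le_ofReal (antitone_ramp _ hmn)) _
  have hsplit (n : ℕ) : hL.outerMeasure (T ∩ {x | 1 ≤ g x}) + upperIntegral F L (k n)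
      ≤ upperIntegral F L h := by
    have hu := hL.ramp_mem hg n
    have hu₀ : 0 ≤ fun x => ramp n (g x) := fun x => ramp_nonneg n _
    have hcap : hL.outerMeasure (T ∩ {x | 1 ≤ g x})
        ≤ upperIntegral F L (h ⊓ fun x => ENNReal.ofReal (ramp n (g x))) := by
      refine outer_le ⟨_, hf.inf (.const hu hu₀) hL⟩ fun x hx => ?_
      simpa [ramp_of_one_le n hx.2] using hT x hx.1
    rw [← hL.upperIntegral_inf_add_tsub ⟨f, hf⟩ hu hu₀]
    gcongr
  have hdiff : hL.outerMeasure (T \ {x | 1 ≤ g x}) ≤ ⨆ n, upperIntegral F L (k n) := by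
    refine (outer_le (hL.iSup_mem_upperClass hk hk_mono) fun x hx => ?_).trans_eq
      (hL.upperIntegral_iSup hk hk_mono)
    obtain ⟨n, hn⟩ := exists_ramp_eq_zero (not_le.1 hx.2)
    calc 1 ≤ k n x := by simpa [k, hn] using hT x hx.1
      _ ≤ (⨆ n, k n) x := le_iSup k n x
  calc hL.outerMeasure (T ∩ {x | 1 ≤ g x}) + hL.outerMeasure (T \ {x | 1 ≤ g x})
      ≤ ⨆ n, (hL.outerMeasure (T ∩ {x | 1 ≤ g x}) + upperIntegral F L (k n)) := by
        rw [← ENNReal.add_iSup]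
        gcongr
    _ ≤ upperIntegral F L h := iSup_le hsplit

theorem measurable_of_mem (hL : IsDaniellIntegral F L) (hf : f ∈ F) :
    Measurable[hL.outerMeasure.caratheodory] f := by
  have of_nonneg (g : X → ℝ) (hg : g ∈ F) (hg₀ : 0 ≤ g) : Measurable[hL.outerMeasure.caratheodory] g := by
    refine measurable_of_Ici fun t => ?_
    rcases le_or_gt t 0 with ht | ht
    · convert MeasurableSet.univ
      exact eq_univ_of_forall fun x => ht.trans (hg₀ x)
    · convert hL.isCaratheodory_setOf_one_le (hL.smul_mem _ (inv_nonneg.2 ht.le) g hg) using 1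
      ext x
      simp [le_inv_mul_iff₀ ht]
  rw [← posPart_sub_negPart f]
  exact (of_nonneg _ (hL.posPart_mem hf) (posPart_nonneg f)).sub
    (of_nonneg _ (hL.negPart_mem hf) (negPart_nonneg f))

theorem generateFrom_le_caratheodory (hL : IsDaniellIntegral F L) :
    MeasurableSpace.generateFrom {A : Set X | ∃ f ∈ F, ∃ a : ℝ, A = f ⁻¹' Iic a}
      ≤ hL.outerMeasure.caratheodory :=
  MeasurableSpace.generateFrom_le fun _ ⟨_, hf, _, hA⟩ =>
    hA ▸ hL.measurable_of_mem hf measurableSet_Iic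

theorem ofReal_L_eq_mul (hL : IsDaniellIntegral F L) (hu : u ∈ F) {c : ℝ} (hc : 0 < c) :
    ENNReal.ofReal (L u) = ENNReal.ofReal c * ENNReal.ofReal (L (c⁻¹ • u)) := by
  rw [← ENNReal.ofReal_mul hc.le, hL.map_smul _ (inv_nonneg.2 hc.le) _ hu,
    mul_inv_cancel_left₀ hc.ne']

theorem ofReal_mul_outer_le (hL : IsDaniellIntegral F L) (hu : u ∈ F) (hu₀ : 0 ≤ u) {c : ℝ}
    (hc : 0 < c) (hA : ∀ x ∈ A, c ≤ u x) :
    ENNReal.ofReal c * outer F L A ≤ ENNReal.ofReal (L u) := by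
  have hv : c⁻¹ • u ∈ F := hL.smul_mem _ (inv_nonneg.2 hc.le) _ hu
  have hv₀ : 0 ≤ c⁻¹ • u := smul_nonneg (inv_nonneg.2 hc.le) hu₀
  rw [hL.ofReal_L_eq_mul hu hc, ← hL.upperIntegral_ofReal hv hv₀]
  gcongr
  refine outer_le ⟨_, .const hv hv₀⟩ fun x hx => ?_
  rw [← ENNReal.ofReal_one]
  exact ENNReal.ofReal_le_ofReal ((le_inv_mul_iff₀ hc).2 (by simpa using hA x hx))

theorem ofReal_le_mul_outer (hL : IsDaniellIntegral F L) (hu : u ∈ F) (hu₀ : 0 ≤ u) {c : ℝ}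
    (hc : 0 < c) (hu_le : ∀ x, u x ≤ c) (hu_zero : ∀ x ∉ A, u x = 0) :
    ENNReal.ofReal (L u) ≤ ENNReal.ofReal c * outer F L A := by
  have hv : c⁻¹ • u ∈ F := hL.smul_mem _ (inv_nonneg.2 hc.le) _ hu
  have hv₀ : 0 ≤ c⁻¹ • u := smul_nonneg (inv_nonneg.2 hc.le) hu₀
  rw [hL.ofReal_L_eq_mul hu hc]
  gcongr
  refine le_outer fun h _ hA => le_upperIntegral hv hv₀ fun x => ?_
  by_cases hx : x ∈ A
  · refine le_trans ?_ (hA x hx)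
    rw [← ENNReal.ofReal_one]
    exact ENNReal.ofReal_le_ofReal ((inv_mul_le_one₀ hc).2 (hu_le x))
  · simp [hu_zero x hx]

theorem piece_mem (hL : IsDaniellIntegral F L) (hg : g ∈ F) {δ : ℝ} (hδ : 0 ≤ δ) (k : ℕ) :
    (fun x => piece δ k (g x)) ∈ F :=
  hL.sub_mem _ (hL.inf_const_mem _ (by positivity) g hg) _ (hL.inf_const_mem _ (by positivity) g hg)
    fun _ => min_le_min_left _ (mul_le_mul_of_nonneg_right (by simp) hδ)

theorem hasSum_L_piece (hL : IsDaniellIntegral F L) (hg : g ∈ F) (hg₀ : 0 ≤ g) {δ : ℝ}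
    (hδ : 0 < δ) : HasSum (fun k => L fun x => piece δ k (g x)) (L g) := by
  let cut : ℕ → X → ℝ := fun n x => min (g x) (n * δ)
  have hcut (n : ℕ) : cut n ∈ F := hL.inf_const_mem _ (by positivity) g hg
  have hcut_mono : Monotone cut := fun m n hmn x =>
    min_le_min_left _ (mul_le_mul_of_nonneg_right (Nat.cast_le.2 hmn) hδ.le)
  have hsum (n : ℕ) : ∑ k ∈ Finset.range n, L (fun x => piece δ k (g x)) = L (cut n) := by
    have hcut₀ : cut 0 = 0 := funext fun x => by simpa [cut] using hg₀ x
    have hstep (k : ℕ) : L (fun x => piece δ k (g x)) = L (cut (k + 1)) - L (cut k) :=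
      hL.map_sub (hcut k) (hcut (k + 1)) (hcut_mono k.le_succ)
    simp_rw [hstep, Finset.sum_range_sub (fun k => L (cut k)), hcut₀, hL.map_zero, sub_zero]
  refine (hasSum_iff_tendsto_nat_of_nonneg (fun k => hL.nonneg (hL.piece_mem hg hδ.le k)
    fun x => piece_nonneg hδ.le k _) _).2 ?_
  simp_rw [hsum]
  exact hL.tendsto cut g hcut hg hcut_mono fun x => tendsto_min_nat_mul hδ (g x)

theorem hasSum_L_piece_succ (hL : IsDaniellIntegral F L) (hg : g ∈ F) (hg₀ : 0 ≤ g) {δ : ℝ}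
    (hδ : 0 < δ) :
    HasSum (fun k => L fun x => piece δ (k + 1) (g x)) (L (g - fun x => min (g x) δ)) := by
  have hpiece₀ : (fun x => piece δ 0 (g x)) = fun x => min (g x) δ :=
    funext fun x => by simpa [piece] using hg₀ x
  rw [hL.map_sub (hL.inf_const_mem δ hδ.le g hg) hg fun x => min_le_left _ _, ← hpiece₀]
  simpa using (hasSum_nat_add_iff' 1).2 (hL.hasSum_L_piece hg hg₀ hδ)

section measure

variable [mX : MeasurableSpace X] {A : Set X}

noncomputable def measure (hL : IsDaniellIntegral F L) (hm : mX ≤ hL.outerMeasure.caratheodory) :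
    Measure X :=
  hL.outerMeasure.toMeasure hm

theorem measure_apply (hL : IsDaniellIntegral F L) (hm : mX ≤ hL.outerMeasure.caratheodory)
    (hA : MeasurableSet A) : hL.measure hm A = outer F L A :=
  toMeasure_apply _ hm hA

variable {δ : ℝ}

theorem lintegral_piece_succ_le (hL : IsDaniellIntegral F L)
    (hm : mX ≤ hL.outerMeasure.caratheodory) (hF : ∀ f ∈ F, Measurable f) (hg : g ∈ F)
    (hδ : 0 < δ) (k : ℕ) :
    ∫⁻ x, ENNReal.ofReal (piece δ (k + 1) (g x)) ∂hL.measure hm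
      ≤ ENNReal.ofReal (L fun x => piece δ k (g x)) := by
  have hA : MeasurableSet {x | ((k + 1 : ℕ) : ℝ) * δ ≤ g x} :=
    measurableSet_le measurable_const (hF g hg)
  calc ∫⁻ x, ENNReal.ofReal (piece δ (k + 1) (g x)) ∂hL.measure hm
      ≤ ENNReal.ofReal δ * hL.measure hm {x | ((k + 1 : ℕ) : ℝ) * δ ≤ g x} :=
        lintegral_le_ofReal_mul hA (fun x => piece_le hδ.le _ _)
          fun x hx => piece_of_le_mul hδ.le (not_le.1 hx).le
    _ ≤ ENNReal.ofReal (L fun x => piece δ k (g x)) := by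
        rw [hL.measure_apply hm hA]
        exact hL.ofReal_mul_outer_le (hL.piece_mem hg hδ.le k) (fun x => piece_nonneg hδ.le k _) hδ
          fun x hx => (piece_of_le hδ.le hx).ge

theorem ofReal_L_piece_succ_le (hL : IsDaniellIntegral F L)
    (hm : mX ≤ hL.outerMeasure.caratheodory) (hF : ∀ f ∈ F, Measurable f) (hg : g ∈ F)
    (hδ : 0 < δ) (k : ℕ) :
    ENNReal.ofReal (L fun x => piece δ (k + 1) (g x))
      ≤ ∫⁻ x, ENNReal.ofReal (piece δ k (g x)) ∂hL.measure hm := by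
  have hA : MeasurableSet {x | ((k + 1 : ℕ) : ℝ) * δ ≤ g x} :=
    measurableSet_le measurable_const (hF g hg)
  calc ENNReal.ofReal (L fun x => piece δ (k + 1) (g x))
      ≤ ENNReal.ofReal δ * hL.measure hm {x | ((k + 1 : ℕ) : ℝ) * δ ≤ g x} := by
        rw [hL.measure_apply hm hA]
        exact hL.ofReal_le_mul_outer (hL.piece_mem hg hδ.le (k + 1))
          (fun x => piece_nonneg hδ.le _ _) hδ (fun x => piece_le hδ.le _ _)
          fun x hx => piece_of_le_mul hδ.le (not_le.1 hx).le
    _ ≤ ∫⁻ x, ENNReal.ofReal (piece δ k (g x)) ∂hL.measure hm :=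
        ofReal_mul_le_lintegral hA fun x hx => (piece_of_le hδ.le hx).ge

theorem lintegral_sub_min_le (hL : IsDaniellIntegral F L)
    (hm : mX ≤ hL.outerMeasure.caratheodory) (hF : ∀ f ∈ F, Measurable f) (hg : g ∈ F)
    (hg₀ : 0 ≤ g) (hδ : 0 < δ) :
    ∫⁻ x, ENNReal.ofReal (g x - min (g x) δ) ∂hL.measure hm ≤ ENNReal.ofReal (L g) := by
  rw [lintegral_ofReal_eq_tsum (fun k => hF _ (hL.piece_mem hg hδ.le (k + 1)))
      (fun k x => piece_nonneg hδ.le _ _) fun x => hasSum_piece_succ (hg₀ x) hδ,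
    ofReal_eq_tsum_of_hasSum (fun k => hL.nonneg (hL.piece_mem hg hδ.le k)
      fun x => piece_nonneg hδ.le k _) (hL.hasSum_L_piece hg hg₀ hδ)]
  exact ENNReal.tsum_le_tsum fun k => hL.lintegral_piece_succ_le hm hF hg hδ k

theorem ofReal_L_sub_min_le (hL : IsDaniellIntegral F L)
    (hm : mX ≤ hL.outerMeasure.caratheodory) (hF : ∀ f ∈ F, Measurable f) (hg : g ∈ F)
    (hg₀ : 0 ≤ g) (hδ : 0 < δ) :
    ENNReal.ofReal (L (g - fun x => min (g x) δ)) ≤ ∫⁻ x, ENNReal.ofReal (g x) ∂hL.measure hm := by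
  rw [lintegral_ofReal_eq_tsum (fun k => hF _ (hL.piece_mem hg hδ.le k))
      (fun k x => piece_nonneg hδ.le _ _) fun x => hasSum_piece (hg₀ x) hδ,
    ofReal_eq_tsum_of_hasSum (fun k => hL.nonneg (hL.piece_mem hg hδ.le (k + 1))
      fun x => piece_nonneg hδ.le _ _) (hL.hasSum_L_piece_succ hg hg₀ hδ)]
  exact ENNReal.tsum_le_tsum fun k => hL.ofReal_L_piece_succ_le hm hF hg hδ k

theorem lintegral_ofReal_eq (hL : IsDaniellIntegral F L)
    (hm : mX ≤ hL.outerMeasure.caratheodory) (hF : ∀ f ∈ F, Measurable f) (hg : g ∈ F)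
    (hg₀ : 0 ≤ g) : ∫⁻ x, ENNReal.ofReal (g x) ∂hL.measure hm = ENNReal.ofReal (L g) := by
  let t : ℕ → X → ℝ := fun n => g - fun x => min (g x) (1 / (n + 1))
  have ht (n : ℕ) : t n ∈ F := hL.sub_inf_const_mem hg (by positivity)
  have ht_mono : Monotone t := fun m n hmn x =>
    sub_le_sub_left (min_le_min_left _ (Nat.one_div_le_one_div hmn)) _
  have ht_lim (x : X) : Tendsto (fun n => t n x) atTop (𝓝 (g x)) := by
    have := (tendsto_const_nhds (x := g x)).sub
      ((tendsto_const_nhds (x := g x)).min (tendsto_one_div_add_atTop_nhds_zero_nat (𝕜 := ℝ)))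
    rwa [min_eq_right (show (0 : ℝ) ≤ g x from hg₀ x), sub_zero] at this
  refine le_antisymm (le_of_tendsto' (lintegral_tendsto_of_tendsto_of_monotone
    (fun n => (hF _ (ht n)).ennreal_ofReal.aemeasurable)
    (ae_of_all _ fun x m n hmn => ENNReal.ofReal_le_ofReal (ht_mono hmn x))
    (ae_of_all _ fun x => (ENNReal.continuous_ofReal.tendsto _).comp (ht_lim x)))
    fun n => hL.lintegral_sub_min_le hm hF hg hg₀ (by positivity)) ?_
  exact le_of_tendsto' ((ENNReal.continuous_ofReal.tendsto _).comp
    (hL.tendsto t g ht hg ht_mono ht_lim)) fun n =>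
    hL.ofReal_L_sub_min_le hm hF hg hg₀ (by positivity)

theorem integrable_of_nonneg (hL : IsDaniellIntegral F L)
    (hm : mX ≤ hL.outerMeasure.caratheodory) (hF : ∀ f ∈ F, Measurable f) (hg : g ∈ F)
    (hg₀ : 0 ≤ g) : Integrable g (hL.measure hm) := by
  refine ⟨(hF g hg).aestronglyMeasurable, ?_⟩
  rw [hasFiniteIntegral_iff_ofReal (ae_of_all _ hg₀), hL.lintegral_ofReal_eq hm hF hg hg₀]
  exact ENNReal.ofReal_lt_top

theorem integral_eq_of_nonneg (hL : IsDaniellIntegral F L)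
    (hm : mX ≤ hL.outerMeasure.caratheodory) (hF : ∀ f ∈ F, Measurable f) (hg : g ∈ F)
    (hg₀ : 0 ≤ g) : ∫ x, g x ∂hL.measure hm = L g := by
  rw [integral_eq_lintegral_of_nonneg_ae (ae_of_all _ hg₀) (hF g hg).aestronglyMeasurable,
    hL.lintegral_ofReal_eq hm hF hg hg₀, ENNReal.toReal_ofReal (hL.nonneg hg hg₀)]

theorem integral_eq (hL : IsDaniellIntegral F L) (hm : mX ≤ hL.outerMeasure.caratheodory)
    (hF : ∀ f ∈ F, Measurable f) (hf : f ∈ F) : ∫ x, f x ∂hL.measure hm = L f := by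
  have hpos := hL.posPart_mem hf
  have hneg := hL.negPart_mem hf
  have hL_pos : L f⁺ = L f + L f⁻ := by
    rw [← hL.map_add f hf _ hneg, ← sub_eq_iff_eq_add.1 (posPart_sub_negPart f)]
  calc ∫ x, f x ∂hL.measure hm = ∫ x, (f⁺ x - f⁻ x) ∂hL.measure hm :=
        congrArg (fun φ : X → ℝ => ∫ x, φ x ∂hL.measure hm) (posPart_sub_negPart f).symm
    _ = L f⁺ - L f⁻ := by
        rw [integral_sub (hL.integrable_of_nonneg hm hF hpos (posPart_nonneg f))
          (hL.integrable_of_nonneg hm hF hneg (negPart_nonneg f)),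
          hL.integral_eq_of_nonneg hm hF hpos (posPart_nonneg f),
          hL.integral_eq_of_nonneg hm hF hneg (negPart_nonneg f)]
    _ = L f := by rw [hL_pos, add_sub_cancel_right]

end measure

end IsDaniellIntegral

end

theorem stmt19 {X : Type*} (F : Set (X → ℝ))
    (hscal : ∀ c : ℝ, 0 ≤ c → ∀ f ∈ F, c • f ∈ F)
    (hadd : ∀ f ∈ F, ∀ g ∈ F, f + g ∈ F)
    (hinf : ∀ f ∈ F, ∀ g ∈ F, (fun x => min (f x) (g x)) ∈ F)
    (hinfc : ∀ c : ℝ, 0 ≤ c → ∀ f ∈ F, (fun x => min (f x) c) ∈ F)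
    (hsub : ∀ f ∈ F, ∀ g ∈ F, (∀ x, f x ≤ g x) → g - f ∈ F)
    (L : (X → ℝ) → ℝ)
    (hLadd : ∀ f ∈ F, ∀ g ∈ F, L (f + g) = L f + L g)
    (hLscal : ∀ c : ℝ, 0 ≤ c → ∀ f ∈ F, L (c • f) = c * L f)
    (hLmono : ∀ f ∈ F, ∀ g ∈ F, (∀ x, f x ≤ g x) → L f ≤ L g)
    (hLcont : ∀ (fn : ℕ → X → ℝ) (g : X → ℝ), (∀ i, fn i ∈ F) → g ∈ F →
      (∀ i x, fn i x ≤ fn (i + 1) x) →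
      (∀ x, Tendsto (fun i => fn i x) atTop (nhds (g x))) →
      Tendsto (fun i => L (fn i)) atTop (nhds (L g)))
    [m : MeasurableSpace X]
    (hm : m = MeasurableSpace.generateFrom
      {A : Set X | ∃ f ∈ F, ∃ a : ℝ, A = f ⁻¹' Set.Iic a}) :
    ∃ μ : Measure X, ∀ f ∈ F, L f = ∫ x, f x ∂μ := by
  rcases F.eq_empty_or_nonempty with rfl | ⟨f₀, hf₀⟩
  · exact ⟨0, fun f hf => absurd hf (notMem_empty f)⟩
  have hL : IsDaniellIntegral F L :=
    { zero_mem := by simpa using hsub f₀ hf₀ f₀ hf₀ fun _ => le_rfl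
      smul_mem := hscal
      add_mem := hadd
      inf_mem := hinf
      inf_const_mem := hinfc
      sub_mem := hsub
      map_add := hLadd
      map_smul := hLscal
      mono := hLmono
      tendsto := fun f g hf hg hmono => hLcont f g hf hg fun n x => hmono n.le_succ x }
  have hF (f : X → ℝ) (hf : f ∈ F) : Measurable f := measurable_of_Iic fun a => by
    rw [hm]
    exact MeasurableSpace.measurableSet_generateFrom ⟨f, hf, a, rfl⟩
  have hcara : m ≤ hL.outerMeasure.caratheodory := hm ▸ hL.generateFrom_le_caratheodory
  exact ⟨hL.measure hcara, fun f hf => (hL.integral_eq hcara hF hf).symm⟩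
end
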